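/- arXiv:1910.04960 — 8 statements merged into one kernel-verified Lean document; each statement's English description precedes it below -/
import Mathlib

section
/- Let C := e^{-rT}·∫_ℝ (S_T(x) − K)⁺ dγ(x) and let P_i(k) := e^{-rT}·∫_ℝ (k − S_T(x))⁺ dγ(x) for k ∈ ℝ. For any v with 0 ≤ v ≤ C, the seller's and buyer's minimal risk exposures under the risk function R₁(x) = x⁺ coincide, i.e. max(e^{rT}(C − v), 0) = ∫_ℝ (v·e^{rT} − (S_T(x) − K)⁺)⁺ dγ(x), if and only if v = C − (P_i(K + v·e^{rT}) − P_i(K)). (Equal-risk price formula for a European call option under a short selling ban with risk function x⁺.) -/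
open MeasureTheory ProbabilityTheory

/-!
With `w = v e^{rT} ≥ 0`, the buyer's shortfall `(w - (s - K)⁺)⁺` equals the put spread
`(K + w - s)⁺ - (K - s)⁺` pointwise, so its expectation is `e^{rT}(P_i(K + w) - P_i(K))`.
Since `v ≤ C`, the seller's exposure is `e^{rT}(C - v)`, and cancelling `e^{rT}` gives the formula.
-/

theorem max_sub_call_payoff_eq_put_spread {w : ℝ} (hw : 0 ≤ w) (K s : ℝ) :
    max (w - max (s - K) 0) 0 = max (K + w - s) 0 - max (K - s) 0 := by
  rcases le_total s K with h | h
  · rw [max_eq_right (by linarith : s - K ≤ 0), max_eq_left (by linarith : 0 ≤ K - s),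
      max_eq_left (by linarith : 0 ≤ K + w - s), sub_zero, max_eq_left hw]
    ring
  · rw [max_eq_left (by linarith : 0 ≤ s - K), max_eq_right (by linarith : K - s ≤ 0), sub_zero]
    ring_nf

section PutPayoff

variable {Ω : Type*} [MeasurableSpace Ω] {μ : Measure Ω} {X : Ω → ℝ}

theorem integrable_put_payoff [IsFiniteMeasure μ] (hX : AEMeasurable X μ)
    (hX_nonneg : ∀ᵐ ω ∂μ, 0 ≤ X ω) (k : ℝ) :
    Integrable (fun ω ↦ max (k - X ω) 0) μ := by
  refine (integrable_const (max k 0)).mono'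
    ((aemeasurable_const.sub hX).max aemeasurable_const).aestronglyMeasurable ?_
  filter_upwards [hX_nonneg] with ω hω
  rw [Real.norm_eq_abs, abs_of_nonneg (le_max_right _ _)]
  exact max_le_max (by linarith) le_rfl

theorem integral_max_sub_call_payoff [IsFiniteMeasure μ] (hX : AEMeasurable X μ)
    (hX_nonneg : ∀ᵐ ω ∂μ, 0 ≤ X ω) (K : ℝ) {w : ℝ} (hw : 0 ≤ w) :
    ∫ ω, max (w - max (X ω - K) 0) 0 ∂μ
      = ∫ ω, max (K + w - X ω) 0 ∂μ - ∫ ω, max (K - X ω) 0 ∂μ := by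
  rw [← integral_sub (integrable_put_payoff hX hX_nonneg _) (integrable_put_payoff hX hX_nonneg _)]
  simp only [max_sub_call_payoff_eq_put_spread hw]

end PutPayoff

theorem equal_risk_call_price_R1_general
    (S K σ T r : ℝ) (hS : 0 < S)
    (ST : ℝ → ℝ)
    (hST : ∀ x, ST x = S * Real.exp ((r - σ ^ 2 / 2) * T + σ * Real.sqrt T * x))
    (C : ℝ)
    (Pi : ℝ → ℝ)
    (hPi : ∀ k, Pi k = Real.exp (-r * T) * ∫ x, max (k - ST x) 0 ∂(gaussianReal 0 1))
    (v : ℝ) (hv0 : 0 ≤ v) (hvC : v ≤ C) :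
    (max (Real.exp (r * T) * (C - v)) 0
        = ∫ x, max (v * Real.exp (r * T) - max (ST x - K) 0) 0 ∂(gaussianReal 0 1))
      ↔ v = C - (Pi (K + v * Real.exp (r * T)) - Pi K) := by
  have hST_meas : Measurable ST := by
    rw [funext hST]
    fun_prop
  have hST_nonneg : ∀ x, 0 ≤ ST x := fun x ↦ by rw [hST]; positivity
  set w := v * Real.exp (r * T)
  have hw : 0 ≤ w := by positivity
  have hbuyer : ∫ x, max (w - max (ST x - K) 0) 0 ∂(gaussianReal 0 1)
      = Real.exp (r * T) * (Pi (K + w) - Pi K) := by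
    rw [integral_max_sub_call_payoff hST_meas.aemeasurable (ae_of_all _ hST_nonneg) K hw,
      hPi, hPi, ← mul_sub, ← mul_assoc, ← Real.exp_add]
    simp
  rw [max_eq_left (mul_nonneg (Real.exp_pos _).le (sub_nonneg.2 hvC)), hbuyer,
    mul_right_inj' (Real.exp_pos _).ne']
  constructor <;> intro h <;> linarith

/-- Equal-risk price formula for a European call option under a short selling ban
with risk function `R₁(x) = x⁺`. -/
theorem equal_risk_call_price_R1
    (S K σ T r : ℝ) (hS : 0 < S) (hK : 0 < K) (hσ : 0 < σ) (hT : 0 < T)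
    (ST : ℝ → ℝ)
    (hST : ∀ x, ST x = S * Real.exp ((r - σ ^ 2 / 2) * T + σ * Real.sqrt T * x))
    (C : ℝ)
    (hC : C = Real.exp (-r * T) * ∫ x, max (ST x - K) 0 ∂(gaussianReal 0 1))
    (Pi : ℝ → ℝ)
    (hPi : ∀ k, Pi k = Real.exp (-r * T) * ∫ x, max (k - ST x) 0 ∂(gaussianReal 0 1))
    (v : ℝ) (hv0 : 0 ≤ v) (hvC : v ≤ C) :
    (max (Real.exp (r * T) * (C - v)) 0
        = ∫ x, max (v * Real.exp (r * T) - max (ST x - K) 0) 0 ∂(gaussianReal 0 1))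
      ↔ v = C - (Pi (K + v * Real.exp (r * T)) - Pi K) :=
  equal_risk_call_price_R1_general S K σ T r hS ST hST C Pi hPi v hv0 hvC
end

section
/- Let Y(x) := (S_T(x) − K)⁺, C := e^{-rT}·∫_ℝ Y(x) dγ(x) and A := ∫_ℝ e^{−Y(x)} dγ(x). Then v := (1/2)·(C − e^{-rT}·ln A) is the unique real number satisfying exp(e^{rT}(C − v)) − 1 = ∫_ℝ (exp(v·e^{rT} − Y(x)) − 1) dγ(x). (Explicit equal-risk price of a European call option under a short selling ban with risk function e^x − 1.) -/
/-!
The payoff `Y` is continuous and nonnegative, so `A = ∫ e^{-Y} dγ` lies in `(0, 1]`. Pulling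
`e^{w e^{rT}}` out of the integral turns the equation into `exp (e^{rT} (C - w)) = exp (w e^{rT}) · A`,
which after taking logarithms is linear in `w` with the single root `v`.
-/

open MeasureTheory ProbabilityTheory Real

section

variable {α : Type*} [MeasurableSpace α] {μ : Measure α} {Y : α → ℝ}

lemma integrable_exp_neg_of_nonneg [IsFiniteMeasure μ] (hYm : AEMeasurable Y μ)
    (hY0 : ∀ᵐ x ∂μ, 0 ≤ Y x) : Integrable (fun x ↦ exp (-Y x)) μ := by
  refine (integrable_const (1 : ℝ)).mono' (by fun_prop) ?_
  filter_upwards [hY0] with x hx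
  rw [norm_of_nonneg (exp_pos _).le, exp_le_one_iff]
  linarith

lemma integral_exp_sub_sub_one [IsProbabilityMeasure μ]
    (hint : Integrable (fun x ↦ exp (-Y x)) μ) (c : ℝ) :
    ∫ x, (exp (c - Y x) - 1) ∂μ = exp c * ∫ x, exp (-Y x) ∂μ - 1 := by
  have hfactor : (fun x ↦ exp (c - Y x)) = fun x ↦ exp c * exp (-Y x) := by
    ext x
    rw [← exp_add, sub_eq_add_neg]
  rw [integral_sub (hfactor ▸ hint.const_mul _) (integrable_const 1), hfactor,
    integral_const_mul, integral_const, probReal_univ, one_smul]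

lemma exp_mul_sub_sub_one_eq_integral_iff [IsProbabilityMeasure μ] (hYm : AEMeasurable Y μ)
    (hY0 : ∀ᵐ x ∂μ, 0 ≤ Y x) {E C w : ℝ} (hE : 0 < E) :
    exp (E * (C - w)) - 1 = ∫ x, (exp (w * E - Y x) - 1) ∂μ ↔
      w = (1 / 2) * (C - E⁻¹ * log (∫ x, exp (-Y x) ∂μ)) := by
  have hint := integrable_exp_neg_of_nonneg hYm hY0
  have hA : 0 < ∫ x, exp (-Y x) ∂μ := integral_exp_pos (f := fun x ↦ -Y x) hint
  rw [integral_exp_sub_sub_one hint, sub_left_inj]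
  set A := ∫ x, exp (-Y x) ∂μ
  rw [← exp_log hA, ← exp_add, exp_eq_exp, log_exp]
  constructor <;> intro h
  · field_simp
    linarith
  · rw [h]
    field_simp
    ring

end

theorem equal_risk_call_price_R2_general
    (S K σ T r : ℝ)
    (ST : ℝ → ℝ)
    (hST : ∀ x, ST x = S * Real.exp ((r - σ ^ 2 / 2) * T + σ * Real.sqrt T * x))
    (Y : ℝ → ℝ) (hY : ∀ x, Y x = max (ST x - K) 0)
    (C : ℝ)
    (A : ℝ) (hA : A = ∫ x, Real.exp (-(Y x)) ∂(gaussianReal 0 1))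
    (v : ℝ) (hv : v = (1 / 2) * (C - Real.exp (-r * T) * Real.log A)) :
    (Real.exp (Real.exp (r * T) * (C - v)) - 1
        = ∫ x, (Real.exp (v * Real.exp (r * T) - Y x) - 1) ∂(gaussianReal 0 1))
    ∧ ∀ w : ℝ,
        (Real.exp (Real.exp (r * T) * (C - w)) - 1
          = ∫ x, (Real.exp (w * Real.exp (r * T) - Y x) - 1) ∂(gaussianReal 0 1))
        → w = v := by
  have hYcont : Continuous Y := by
    simp only [funext hY, hST]
    fun_prop
  have hv' : v = (1 / 2) * (C - (exp (r * T))⁻¹ * log A) := by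
    rw [hv, ← exp_neg, neg_mul]
  have hiff (w : ℝ) := exp_mul_sub_sub_one_eq_integral_iff (μ := gaussianReal 0 1) (C := C) (w := w)
    hYcont.aemeasurable (.of_forall fun x ↦ (hY x).symm ▸ le_max_right _ _) (exp_pos (r * T))
  rw [← hA, ← hv'] at hiff
  exact ⟨(hiff v).2 rfl, fun w hw ↦ (hiff w).1 hw⟩

/-- Explicit equal-risk price of a European call option under a short selling ban
with risk function `R₂(x) = e^x - 1`. -/
theorem equal_risk_call_price_R2
    (S K σ T r : ℝ) (hS : 0 < S) (hK : 0 < K) (hσ : 0 < σ) (hT : 0 < T)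
    (ST : ℝ → ℝ)
    (hST : ∀ x, ST x = S * Real.exp ((r - σ ^ 2 / 2) * T + σ * Real.sqrt T * x))
    (Y : ℝ → ℝ) (hY : ∀ x, Y x = max (ST x - K) 0)
    (C : ℝ) (hC : C = Real.exp (-r * T) * ∫ x, Y x ∂(gaussianReal 0 1))
    (A : ℝ) (hA : A = ∫ x, Real.exp (-(Y x)) ∂(gaussianReal 0 1))
    (v : ℝ) (hv : v = (1 / 2) * (C - Real.exp (-r * T) * Real.log A)) :
    (Real.exp (Real.exp (r * T) * (C - v)) - 1
        = ∫ x, (Real.exp (v * Real.exp (r * T) - Y x) - 1) ∂(gaussianReal 0 1))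
    ∧ ∀ w : ℝ,
        (Real.exp (Real.exp (r * T) * (C - w)) - 1
          = ∫ x, (Real.exp (w * Real.exp (r * T) - Y x) - 1) ∂(gaussianReal 0 1))
        → w = v :=
  equal_risk_call_price_R2_general S K σ T r ST hST Y hY C A hA v hv
end

section
/- Let P_i(k) := e^{-rT}·∫_ℝ (k − S_T(x))⁺ dγ(x) for k ∈ ℝ and let P := P_i(K). For any v with v ≥ P, the seller's and buyer's minimal risk exposures under the risk function R₁(x) = x⁺ coincide, i.e. ∫_ℝ ((K − S_T(x))⁺ − v·e^{rT})⁺ dγ(x) = e^{rT}(v − P), if and only if v = P + P_i(K − v·e^{rT}). (Equal-risk price formula for a European put option under a short selling ban with risk function x⁺.) -/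
open MeasureTheory ProbabilityTheory

/-! Since `v ≥ P ≥ 0`, the amount `c = v·e^{rT}` is nonnegative, and for `c ≥ 0` one has
`((K - s)⁺ - c)⁺ = (K - c - s)⁺`. So the seller's risk is `e^{rT}·P_i(K - c)`, and the
equivalence is a rearrangement. -/

theorem max_max_zero_sub_zero_of_nonneg {α : Type*} [AddCommGroup α] [LinearOrder α]
    [IsOrderedAddMonoid α] (a : α) {c : α} (hc : 0 ≤ c) : max (max a 0 - c) 0 = max (a - c) 0 := by
  rw [← max_sub_sub_right, zero_sub, max_assoc, max_eq_right (neg_nonpos.mpr hc)]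

theorem equal_risk_put_price_R1_general
    (K T r : ℝ)
    (ST : ℝ → ℝ)
    (Pi : ℝ → ℝ)
    (hPi : ∀ k, Pi k = Real.exp (-r * T) * ∫ x, max (k - ST x) 0 ∂(gaussianReal 0 1))
    (P : ℝ) (hP : P = Pi K)
    (v : ℝ) (hvP : P ≤ v) :
    (∫ x, max (max (K - ST x) 0 - v * Real.exp (r * T)) 0 ∂(gaussianReal 0 1)
        = Real.exp (r * T) * (v - P))
      ↔ v = P + Pi (K - v * Real.exp (r * T)) := by
  have hP_nonneg : 0 ≤ P := by
    rw [hP, hPi]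
    exact mul_nonneg (Real.exp_pos _).le (integral_nonneg fun _ => le_max_right _ _)
  have hc : 0 ≤ v * Real.exp (r * T) := mul_nonneg (hP_nonneg.trans hvP) (Real.exp_pos _).le
  have hpayoff : ∀ x, max (max (K - ST x) 0 - v * Real.exp (r * T)) 0
      = max ((K - v * Real.exp (r * T)) - ST x) 0 := fun x => by
    rw [max_max_zero_sub_zero_of_nonneg _ hc, sub_right_comm]
  simp only [hpayoff, hPi, neg_mul, Real.exp_neg]
  rw [← sub_eq_iff_eq_add', eq_inv_mul_iff_mul_eq₀ (Real.exp_pos _).ne', eq_comm]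

/-- Equal-risk price formula for a European put option under a short selling ban
with risk function `R₁(x) = x⁺`. -/
theorem equal_risk_put_price_R1
    (S K σ T r : ℝ) (hS : 0 < S) (hK : 0 < K) (hσ : 0 < σ) (hT : 0 < T)
    (ST : ℝ → ℝ)
    (hST : ∀ x, ST x = S * Real.exp ((r - σ ^ 2 / 2) * T + σ * Real.sqrt T * x))
    (Pi : ℝ → ℝ)
    (hPi : ∀ k, Pi k = Real.exp (-r * T) * ∫ x, max (k - ST x) 0 ∂(gaussianReal 0 1))
    (P : ℝ) (hP : P = Pi K)
    (v : ℝ) (hvP : P ≤ v) :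
    (∫ x, max (max (K - ST x) 0 - v * Real.exp (r * T)) 0 ∂(gaussianReal 0 1)
        = Real.exp (r * T) * (v - P))
      ↔ v = P + Pi (K - v * Real.exp (r * T)) :=
  equal_risk_put_price_R1_general K T r ST Pi hPi P hP v hvP
end

section
/- Let Z(x) := (K − S_T(x))⁺, P := e^{-rT}·∫_ℝ Z(x) dγ(x) and B := ∫_ℝ e^{Z(x)} dγ(x). Then v := (1/2)·(P + e^{-rT}·ln B) is the unique real number satisfying ∫_ℝ (exp(Z(x) − v·e^{rT}) − 1) dγ(x) = exp(e^{rT}(v − P)) − 1. (Explicit equal-risk price of a European put option under a short selling ban with risk function e^x − 1.) -/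
open MeasureTheory ProbabilityTheory

/-- Explicit equal-risk price of a European put option under a short selling ban
with risk function `R₂(x) = e^x - 1`. -/
theorem equal_risk_put_price_R2
    (S K σ T r : ℝ) (hS : 0 < S) (hK : 0 < K) (hσ : 0 < σ) (hT : 0 < T)
    (ST : ℝ → ℝ)
    (hST : ∀ x, ST x = S * Real.exp ((r - σ ^ 2 / 2) * T + σ * Real.sqrt T * x))
    (Z : ℝ → ℝ) (hZ : ∀ x, Z x = max (K - ST x) 0)
    (P : ℝ) (hP : P = Real.exp (-r * T) * ∫ x, Z x ∂(gaussianReal 0 1))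
    (B : ℝ) (hB : B = ∫ x, Real.exp (Z x) ∂(gaussianReal 0 1))
    (v : ℝ) (hv : v = (1 / 2) * (P + Real.exp (-r * T) * Real.log B)) :
    (∫ x, (Real.exp (Z x - v * Real.exp (r * T)) - 1) ∂(gaussianReal 0 1)
        = Real.exp (Real.exp (r * T) * (v - P)) - 1)
    ∧ ∀ w : ℝ,
        (∫ x, (Real.exp (Z x - w * Real.exp (r * T)) - 1) ∂(gaussianReal 0 1)
          = Real.exp (Real.exp (r * T) * (w - P)) - 1)
        → w = v := by
  set μ := gaussianReal 0 1
  set E := Real.exp (r * T) with hE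
  have hEpos : 0 < E := Real.exp_pos _
  have hZeq : Z = fun x => max (K - ST x) 0 := funext hZ
  have hSTeq : ST = fun x => S * Real.exp ((r - σ ^ 2 / 2) * T + σ * Real.sqrt T * x) :=
    funext hST
  have hZcont : Continuous Z := by
    rw [hZeq, hSTeq]; continuity
  have hZbd : ∀ x, Z x ≤ K := by
    intro x
    rw [hZ]
    have : 0 < ST x := by rw [hST]; positivity
    exact max_le (by linarith) hK.le
  have hZnn : ∀ x, 0 ≤ Z x := fun x => by rw [hZ]; exact le_max_right _ _
  have hint : Integrable (fun x => Real.exp (Z x)) μ := by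
    refine (integrable_const (Real.exp K)).mono' ?_ ?_
    · exact (Real.continuous_exp.comp hZcont).aestronglyMeasurable
    · filter_upwards with x
      rw [Real.norm_eq_abs, abs_of_pos (Real.exp_pos _)]
      exact Real.exp_le_exp.2 (hZbd x)
  have hBge : 1 ≤ B := by
    rw [hB]
    calc (1 : ℝ) = ∫ _x, (1 : ℝ) ∂μ := by simp [μ]
    _ ≤ ∫ x, Real.exp (Z x) ∂μ := by
        refine integral_mono (integrable_const 1) hint fun x => ?_
        simpa using Real.one_le_exp (hZnn x)
  have hBpos : 0 < B := lt_of_lt_of_le one_pos hBge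
  have key : ∀ w : ℝ, (∫ x, (Real.exp (Z x - w * E) - 1) ∂μ)
      = Real.exp (-(w * E)) * B - 1 := by
    intro w
    have h1 : (fun x => Real.exp (Z x - w * E) - 1)
        = fun x => Real.exp (Z x) * Real.exp (-(w * E)) - 1 := by
      funext x; rw [← Real.exp_add]; ring_nf
    rw [h1, integral_sub (hint.mul_const _) (integrable_const 1),
      integral_mul_const, integral_const]
    simp only [integral_const, measure_univ, probReal_univ, ENNReal.toReal_one, smul_eq_mul, one_mul, ← hB]; ring
  have hExpInv : Real.exp (-r * T) * E = 1 := by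
    rw [hE, ← Real.exp_add]; simp
  have hlogB : Real.log B = 2 * v * E - E * P := by
    have h2v : 2 * v = P + Real.exp (-r * T) * Real.log B := by rw [hv]; ring
    have : 2 * v * E = P * E + (Real.exp (-r * T) * E) * Real.log B := by
      rw [h2v]; ring
    rw [hExpInv] at this; linarith
  constructor
  · rw [key v]
    have : Real.exp (-(v * E)) * B = Real.exp (E * (v - P)) := by
      rw [← Real.exp_log hBpos, ← Real.exp_add, hlogB]
      ring_nf
    rw [this]
  · intro w hw
    rw [key w] at hw
    have h2 : Real.exp (-(w * E) + Real.log B) = Real.exp (E * (w - P)) := by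
      rw [Real.exp_add, Real.exp_log hBpos]; linarith
    have h3 : -(w * E) + Real.log B = E * (w - P) := Real.exp_injective h2
    rw [hlogB] at h3
    have : (2 * E) * w = (2 * E) * v := by ring_nf; ring_nf at h3; linarith
    exact mul_left_cancel₀ (by positivity) this
end

section
/- The discounted Gaussian expectation of the call payoff equals the Black–Scholes call formula: e^{-rT}·∫_ℝ (S_T(x) − K)⁺ dγ(x) = S·Φ(d₁) − K·e^{−rT}·Φ(d₂), where d₁ = (ln(S/K) + (r + σ²/2)T)/(σ√T) and d₂ = d₁ − σ√T. -/
open MeasureTheory ProbabilityTheory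
open scoped ENNReal NNReal Real

lemma gaussian01_eq_withDensity :
    gaussianReal 0 1 = volume.withDensity
      (fun x => ((Real.toNNReal (gaussianPDFReal 0 1 x)) : ℝ≥0∞)) := by
  rw [gaussianReal_of_var_ne_zero 0 one_ne_zero]
  rfl

lemma gaussian01_singleton (y : ℝ) : gaussianReal 0 1 {y} = 0 :=
  gaussianReal_absolutelyContinuous 0 one_ne_zero (by simp)

lemma gaussian01_Ici (y : ℝ) : gaussianReal 0 1 (Set.Ici y) = gaussianReal 0 1 (Set.Ioi y) := by
  refine le_antisymm ?_ (measure_mono Set.Ioi_subset_Ici_self)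
  calc gaussianReal 0 1 (Set.Ici y) = gaussianReal 0 1 (Set.Ioi y ∪ {y}) := by
        rw [Set.Ioi_union_left]
    _ ≤ gaussianReal 0 1 (Set.Ioi y) + gaussianReal 0 1 {y} := measure_union_le _ _
    _ = gaussianReal 0 1 (Set.Ioi y) := by rw [gaussian01_singleton, add_zero]

lemma gaussian01_map_neg :
    (gaussianReal 0 1).map (fun x => (-1 : ℝ) * x) = gaussianReal 0 1 := by
  rw [gaussianReal_map_const_mul (-1 : ℝ)]
  norm_num

lemma gaussian01_Ioi (y : ℝ) :
    gaussianReal 0 1 (Set.Ioi y) = gaussianReal 0 1 (Set.Iic (-y)) := by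
  conv_rhs => rw [← gaussian01_map_neg]
  rw [Measure.map_apply (by fun_prop) measurableSet_Iic]
  have : (fun x => (-1 : ℝ) * x) ⁻¹' Set.Iic (-y) = Set.Ici y := by
    ext x
    simp [Set.mem_Iic, Set.mem_Ici]
  rw [this, gaussian01_Ici]

lemma pdf_shift (a b x : ℝ) :
    Real.exp (a + b * x) * gaussianPDFReal 0 1 x
      = Real.exp (a + b ^ 2 / 2) * gaussianPDFReal b 1 x := by
  simp only [gaussianPDFReal, NNReal.coe_one, mul_one, sub_zero]
  rw [mul_left_comm, mul_left_comm (Real.exp (a + b ^ 2 / 2)), ← Real.exp_add, ← Real.exp_add]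
  congr 2
  ring

lemma int_pdf_Ioi (b c : ℝ) :
    ∫ x in Set.Ioi c, gaussianPDFReal b 1 x
      = ((gaussianReal 0 1) (Set.Ioi (c - b))).toReal := by
  have h1 : gaussianReal b 1 (Set.Ioi c)
      = ENNReal.ofReal (∫ x in Set.Ioi c, gaussianPDFReal b 1 x) :=
    gaussianReal_apply_eq_integral b one_ne_zero _
  have h2 : gaussianReal b 1 = (gaussianReal 0 1).map (· + b) := by
    rw [gaussianReal_map_add_const, zero_add]
  have h3 : gaussianReal b 1 (Set.Ioi c) = gaussianReal 0 1 (Set.Ioi (c - b)) := by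
    rw [h2, Measure.map_apply (by fun_prop) measurableSet_Ioi]
    congr 1
    ext x
    simp [sub_lt_iff_lt_add]
  rw [← h3, h1, ENNReal.toReal_ofReal
    (setIntegral_nonneg measurableSet_Ioi fun x _ => gaussianPDFReal_nonneg _ _ _)]

lemma integrable_exp_gaussian (a b : ℝ) :
    Integrable (fun x => Real.exp (a + b * x)) (gaussianReal 0 1) := by
  rw [gaussianReal_of_var_ne_zero 0 one_ne_zero,
    integrable_withDensity_iff (measurable_gaussianPDF 0 1)
      (ae_of_all _ fun x => ENNReal.ofReal_lt_top)]
  have h : (fun x => Real.exp (a + b * x) * (gaussianPDF 0 1 x).toReal)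
      = fun x => Real.exp (a + b ^ 2 / 2) * gaussianPDFReal b 1 x := by
    funext x
    rw [gaussianPDF, ENNReal.toReal_ofReal (gaussianPDFReal_nonneg _ _ _), pdf_shift]
  rw [h]
  exact (integrable_gaussianPDFReal b 1).const_mul _

lemma setIntegral_gaussian (g : ℝ → ℝ) (s : Set ℝ) (hs : MeasurableSet s) :
    ∫ x in s, g x ∂(gaussianReal 0 1) = ∫ x in s, gaussianPDFReal 0 1 x * g x := by
  rw [gaussian01_eq_withDensity,
    setIntegral_withDensity_eq_setIntegral_smul
      ((measurable_gaussianPDFReal 0 1).real_toNNReal) g hs]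
  refine setIntegral_congr_fun hs fun x _ => ?_
  simp [NNReal.smul_def, Real.coe_toNNReal _ (gaussianPDFReal_nonneg 0 1 x)]

lemma int_exp_Ioi (a b c : ℝ) :
    ∫ x in Set.Ioi c, Real.exp (a + b * x) ∂(gaussianReal 0 1)
      = Real.exp (a + b ^ 2 / 2) * ((gaussianReal 0 1) (Set.Ioi (c - b))).toReal := by
  rw [setIntegral_gaussian _ _ measurableSet_Ioi]
  have h : ∀ x, gaussianPDFReal 0 1 x * Real.exp (a + b * x)
      = Real.exp (a + b ^ 2 / 2) * gaussianPDFReal b 1 x := fun x => by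
    rw [mul_comm, pdf_shift]
  simp_rw [h]
  rw [integral_const_mul, int_pdf_Ioi]

/-- The discounted Gaussian expectation of the call payoff equals the
Black–Scholes call formula. -/
theorem discounted_call_payoff_eq_BS_formula
    (S K σ T r : ℝ) (hS : 0 < S) (hK : 0 < K) (hσ : 0 < σ) (hT : 0 < T)
    (ST : ℝ → ℝ)
    (hST : ∀ x, ST x = S * Real.exp ((r - σ ^ 2 / 2) * T + σ * Real.sqrt T * x))
    (Φ : ℝ → ℝ) (hΦ : ∀ y, Φ y = ((gaussianReal 0 1) (Set.Iic y)).toReal)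
    (d₁ d₂ : ℝ)
    (hd₁ : d₁ = (Real.log (S / K) + (r + σ ^ 2 / 2) * T) / (σ * Real.sqrt T))
    (hd₂ : d₂ = d₁ - σ * Real.sqrt T) :
    Real.exp (-r * T) * ∫ x, max (ST x - K) 0 ∂(gaussianReal 0 1)
      = S * Φ d₁ - K * Real.exp (-r * T) * Φ d₂ := by
  have hb : 0 < σ * Real.sqrt T := mul_pos hσ (Real.sqrt_pos.mpr hT)
  set b := σ * Real.sqrt T with hbdef
  set a := (r - σ ^ 2 / 2) * T with hadef
  have hb2 : b ^ 2 = σ ^ 2 * T := by rw [hbdef, mul_pow, Real.sq_sqrt hT.le]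
  have hd1b : d₁ * b = Real.log S - Real.log K + (r + σ ^ 2 / 2) * T := by
    rw [hd₁, ← Real.log_div hS.ne' hK.ne', div_mul_cancel₀ _ hb.ne']
  have hmd2 : -d₂ * b = (Real.log K - Real.log S) - a := by
    rw [hd₂]
    have : (-(d₁ - b)) * b = -(d₁ * b) + b ^ 2 := by ring
    rw [this, hd1b, hb2, hadef]
    ring
  -- the payoff is positive exactly above -d₂
  have hiff : ∀ x, ST x ≤ K ↔ x ≤ -d₂ := by
    intro x
    rw [hST x, ← Real.log_le_log_iff (by positivity) hK,
      Real.log_mul hS.ne' (Real.exp_ne_zero _), Real.log_exp]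
    conv_rhs => rw [← mul_le_mul_iff_of_pos_right hb]
    rw [hmd2]
    constructor <;> intro h <;> linarith
  have hind : ∀ x, max (ST x - K) 0
      = (Set.Ioi (-d₂)).indicator (fun x => S * Real.exp (a + b * x) - K) x := by
    intro x
    by_cases hx : x ∈ Set.Ioi (-d₂)
    · rw [Set.indicator_of_mem hx, hST x]
      have h2 : ¬ ST x ≤ K := fun h => absurd ((hiff x).mp h) (not_le.mpr hx)
      rw [hST x] at h2
      exact max_eq_left (sub_nonneg.mpr (not_le.mp h2).le)
    · rw [Set.indicator_of_notMem hx]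
      have h2 : ST x ≤ K := (hiff x).mpr (not_lt.mp (by simpa using hx))
      exact max_eq_right (by linarith)
  have hint : ∫ x, max (ST x - K) 0 ∂(gaussianReal 0 1)
      = ∫ x in Set.Ioi (-d₂), (S * Real.exp (a + b * x) - K) ∂(gaussianReal 0 1) := by
    rw [← integral_indicator measurableSet_Ioi]
    exact integral_congr_ae (ae_of_all _ hind)
  rw [hint, integral_sub (((integrable_exp_gaussian a b).const_mul S).restrict)
    ((integrable_const K).restrict), integral_const_mul, setIntegral_const,
    int_exp_Ioi a b (-d₂)]
  have hIic1 : gaussianReal 0 1 (Set.Ioi (-d₂ - b)) = gaussianReal 0 1 (Set.Iic d₁) := by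
    rw [gaussian01_Ioi]
    congr 1
    have : d₁ = d₂ + b := by rw [hd₂]; ring
    rw [this]
    ring_nf
  have hIic2 : gaussianReal 0 1 (Set.Ioi (-d₂)) = gaussianReal 0 1 (Set.Iic d₂) := by
    rw [gaussian01_Ioi, neg_neg]
  have hexp : a + b ^ 2 / 2 = r * T := by rw [hadef, hb2]; ring
  rw [hIic1, measureReal_def, hIic2, hexp, ← hΦ d₁, ← hΦ d₂, smul_eq_mul]
  have h1 : Real.exp (-r * T) * Real.exp (r * T) = 1 := by
    rw [← Real.exp_add]; simp
  linear_combination S * Φ d₁ * h1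
end

section
/- The discounted Gaussian expectation of the put payoff equals the Black–Scholes put formula: e^{-rT}·∫_ℝ (K − S_T(x))⁺ dγ(x) = K·e^{−rT}·Φ(−d₂) − S·Φ(−d₁), where d₁ = (ln(S/K) + (r + σ²/2)T)/(σ√T) and d₂ = d₁ − σ√T. -/
open MeasureTheory ProbabilityTheory
open scoped ENNReal NNReal

lemma gaussPDF_exp_mul (c x : ℝ) : Real.exp (c * x) * gaussianPDFReal 0 1 x
    = Real.exp (c ^ 2 / 2) * gaussianPDFReal c 1 x := by
  rw [gaussianPDFReal, gaussianPDFReal, mul_left_comm, ← Real.exp_add, mul_left_comm,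
    ← Real.exp_add]
  congr 1
  push_cast
  ring

lemma gaussianReal_shift_Iic (c a : ℝ) :
    gaussianReal c 1 (Set.Iic a) = gaussianReal 0 1 (Set.Iic (a - c)) := by
  have h := gaussianReal_map_add_const (μ := 0) (v := 1) c
  rw [zero_add] at h
  rw [← h, Measure.map_apply (by fun_prop) measurableSet_Iic]
  congr 1
  ext x
  simp only [Set.mem_preimage, Set.mem_Iic]
  constructor <;> intro <;> linarith

lemma gaussianReal_one_eq : gaussianReal 0 1
    = volume.withDensity (fun x => ((gaussianPDFReal 0 1 x).toNNReal : ℝ≥0∞)) := by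
  rw [gaussianReal_of_var_ne_zero _ one_ne_zero]
  rfl

lemma gauss_exp_integrableOn (c a : ℝ) :
    IntegrableOn (fun x => Real.exp (c * x)) (Set.Iic a) (gaussianReal 0 1) := by
  rw [IntegrableOn, gaussianReal_one_eq, restrict_withDensity measurableSet_Iic,
    integrable_withDensity_iff_integrable_smul
      ((measurable_gaussianPDFReal 0 1).real_toNNReal)]
  have heq : ∀ x : ℝ, (gaussianPDFReal 0 1 x).toNNReal • Real.exp (c * x)
      = Real.exp (c ^ 2 / 2) * gaussianPDFReal c 1 x := by
    intro x
    rw [NNReal.smul_def, smul_eq_mul, Real.coe_toNNReal _ (gaussianPDFReal_nonneg 0 1 x),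
      mul_comm, gaussPDF_exp_mul]
  refine (Integrable.congr ?_ (ae_of_all _ fun x => (heq x).symm))
  exact ((integrable_gaussianPDFReal c 1).const_mul _).restrict

lemma gauss_exp_setIntegral (c a : ℝ) :
    ∫ x in Set.Iic a, Real.exp (c * x) ∂(gaussianReal 0 1)
      = Real.exp (c ^ 2 / 2) * ((gaussianReal 0 1) (Set.Iic (a - c))).toReal := by
  rw [gaussianReal_one_eq, restrict_withDensity measurableSet_Iic,
    integral_withDensity_eq_integral_smul
      ((measurable_gaussianPDFReal 0 1).real_toNNReal)]
  have heq : ∀ x : ℝ, (gaussianPDFReal 0 1 x).toNNReal • Real.exp (c * x)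
      = Real.exp (c ^ 2 / 2) * gaussianPDFReal c 1 x := by
    intro x
    rw [NNReal.smul_def, smul_eq_mul, Real.coe_toNNReal _ (gaussianPDFReal_nonneg 0 1 x),
      mul_comm, gaussPDF_exp_mul]
  rw [setIntegral_congr_fun measurableSet_Iic (fun x _ => heq x), integral_const_mul,
    ← gaussianReal_one_eq, ← gaussianReal_shift_Iic, gaussianReal_apply_eq_integral _ one_ne_zero,
    ENNReal.toReal_ofReal]
  exact integral_nonneg fun x => gaussianPDFReal_nonneg _ _ _

/-- The discounted Gaussian expectation of the put payoff equals the
Black–Scholes put formula. -/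
theorem discounted_put_payoff_eq_BS_formula
    (S K σ T r : ℝ) (hS : 0 < S) (hK : 0 < K) (hσ : 0 < σ) (hT : 0 < T)
    (ST : ℝ → ℝ)
    (hST : ∀ x, ST x = S * Real.exp ((r - σ ^ 2 / 2) * T + σ * Real.sqrt T * x))
    (Φ : ℝ → ℝ) (hΦ : ∀ y, Φ y = ((gaussianReal 0 1) (Set.Iic y)).toReal)
    (d₁ d₂ : ℝ)
    (hd₁ : d₁ = (Real.log (S / K) + (r + σ ^ 2 / 2) * T) / (σ * Real.sqrt T))
    (hd₂ : d₂ = d₁ - σ * Real.sqrt T) :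
    Real.exp (-r * T) * ∫ x, max (K - ST x) 0 ∂(gaussianReal 0 1)
      = K * Real.exp (-r * T) * Φ (-d₂) - S * Φ (-d₁) := by
  set s : ℝ := σ * Real.sqrt T with hs
  have hsT : 0 < Real.sqrt T := Real.sqrt_pos.2 hT
  have hs0 : 0 < s := mul_pos hσ hsT
  have hsq : s ^ 2 = σ ^ 2 * T := by
    rw [hs, mul_pow, Real.sq_sqrt hT.le]
  set b : ℝ := (r - σ ^ 2 / 2) * T with hb
  -- identify -d₂
  have h2 : -d₂ = (Real.log (K / S) - b) / s := by
    rw [hd₂, hd₁, Real.log_div hS.ne' hK.ne', Real.log_div hK.ne' hS.ne', hb]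
    field_simp
    linear_combination 2 * σ ^ 2 * Real.sq_sqrt hT.le
  -- monotonicity threshold
  have hmono : ∀ x : ℝ, x ≤ -d₂ ↔ ST x ≤ K := by
    intro x
    rw [hST x, h2, le_div_iff₀ hs0]
    have h1 : S * Real.exp (b + s * x) ≤ K ↔ Real.exp (b + s * x) ≤ K / S := by
      rw [le_div_iff₀ hS, mul_comm]
    rw [h1, ← Real.le_log_iff_exp_le (div_pos hK hS)]
    constructor <;> intro <;> linarith
  -- rewrite max as indicator
  have hind : (fun x => max (K - ST x) 0)
      = (Set.Iic (-d₂)).indicator (fun x => K - ST x) := by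
    funext x
    by_cases hx : x ≤ -d₂
    · rw [Set.indicator_of_mem (Set.mem_Iic.2 hx)]
      exact max_eq_left (sub_nonneg.2 ((hmono x).1 hx))
    · rw [Set.indicator_of_notMem (by simpa using hx)]
      exact max_eq_right (sub_nonpos.2 (le_of_lt (lt_of_not_ge
        (fun h => hx ((hmono x).2 h)))))
  rw [hind, integral_indicator measurableSet_Iic]
  -- integrability of ST on the set
  have hSTint : IntegrableOn ST (Set.Iic (-d₂)) (gaussianReal 0 1) := by
    refine (Integrable.congr (((gauss_exp_integrableOn s (-d₂)).const_mul
      (S * Real.exp b))) (ae_of_all _ fun x => ?_))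
    show S * Real.exp b * Real.exp (s * x) = ST x
    rw [hST x, Real.exp_add, ← mul_assoc]
  rw [integral_sub ((integrable_const K).restrict) hSTint, setIntegral_const]
  have hbe : Real.exp b * Real.exp (s ^ 2 / 2) = Real.exp (r * T) := by
    rw [← Real.exp_add]
    congr 1
    rw [hb]
    linear_combination hsq / 2
  have hSTval : ∫ x in Set.Iic (-d₂), ST x ∂(gaussianReal 0 1)
      = S * Real.exp (r * T) * ((gaussianReal 0 1) (Set.Iic (-d₁))).toReal := by
    have hfun : ∀ x ∈ Set.Iic (-d₂), ST x = S * Real.exp b * Real.exp (s * x) := by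
      intro x _
      rw [hST x, Real.exp_add, ← mul_assoc]
    rw [setIntegral_congr_fun measurableSet_Iic hfun, integral_const_mul,
      gauss_exp_setIntegral]
    have hd : -d₂ - s = -d₁ := by rw [hd₂]; ring
    rw [hd]
    linear_combination S * ((gaussianReal 0 1) (Set.Iic (-d₁))).toReal * hbe
  rw [hSTval, hΦ, hΦ, smul_eq_mul]
  have hexp : Real.exp (-r * T) * Real.exp (r * T) = 1 := by
    rw [← Real.exp_add]; simp
  rw [measureReal_def]
  set X := ((gaussianReal 0 1) (Set.Iic (-d₂))).toReal
  set Y := ((gaussianReal 0 1) (Set.Iic (-d₁))).toReal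
  linear_combination (-(S * Y)) * hexp
end

section
/- The Black–Scholes call price function satisfies the Black–Scholes partial differential equation: for C(t,s) := s·Φ(d₁(t,s)) − K·e^{−r(T−t)}·Φ(d₂(t,s)) with d₁(t,s) = (ln(s/K) + (r + σ²/2)(T − t))/(σ√(T − t)) and d₂(t,s) = d₁(t,s) − σ√(T − t), one has for every 0 ≤ t < T and s > 0: ∂C/∂t (t,s) + (1/2)σ²s²·∂²C/∂s² (t,s) + r·s·∂C/∂s (t,s) − r·C(t,s) = 0. -/
/-!
Let φ = Φ' be the standard Gaussian density and d₂ = d₁ − σ√(T − t). Completing the square in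
φ(d₁ − σ√(T − t)) gives K e^{−r(T−t)} φ(d₂) = s φ(d₁). Hence, when C is differentiated in s or
in t, the two terms through the derivative of d₁ cancel, leaving Δ = Φ(d₁), Γ = φ(d₁)/(sσ√(T − t))
and Θ = −sφ(d₁)σ/(2√(T − t)) − rKe^{−r(T−t)}Φ(d₂); the PDE is then an algebraic identity.
-/

open MeasureTheory Real Set Filter Topology ProbabilityTheory

theorem hasDerivAt_integral_Iic {E : Type*} [NormedAddCommGroup E] [NormedSpace ℝ E]
    [CompleteSpace E] {f : ℝ → E} (hf : Continuous f) (hfi : Integrable f) (y : ℝ) :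
    HasDerivAt (fun z => ∫ x in Iic z, f x) (f y) y := by
  have hsplit : (fun z => ∫ x in Iic z, f x) = fun z => (∫ x in Iic 0, f x) + ∫ x in 0..z, f x := by
    funext z
    rw [← intervalIntegral.integral_Iic_sub_Iic hfi.integrableOn hfi.integrableOn]
    abel
  rw [hsplit]
  exact (hf.integral_hasStrictDerivAt 0 y).hasDerivAt.const_add _

theorem continuous_gaussianPDFReal (μ : ℝ) (v : NNReal) : Continuous (gaussianPDFReal μ v) := by
  rw [gaussianPDFReal_def]
  fun_prop

theorem gaussianPDFReal_zero_one (x : ℝ) :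
    gaussianPDFReal 0 1 x = exp (-x ^ 2 / 2) / √(2 * π) := by
  simp [gaussianPDFReal_def, div_eq_inv_mul]

theorem gaussianPDFReal_zero_one_sub (d v : ℝ) :
    gaussianPDFReal 0 1 (d - v) = gaussianPDFReal 0 1 d * exp (d * v - v ^ 2 / 2) := by
  simp only [gaussianPDFReal_zero_one, div_mul_eq_mul_div, ← exp_add]
  ring_nf

theorem hasDerivAt_mul_comp_sub_mul_comp_sub {Φ φ S D a b : ℝ → ℝ} {x S' D' a' b' : ℝ}
    (hΦ : ∀ y, HasDerivAt Φ (φ y) y) (hS : HasDerivAt S S' x) (hD : HasDerivAt D D' x)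
    (ha : HasDerivAt a a' x) (hb : HasDerivAt b b' x)
    (hφ : D x * φ (a x - b x) = S x * φ (a x)) :
    HasDerivAt (fun y => S y * Φ (a y) - D y * Φ (a y - b y))
      (S' * Φ (a x) - D' * Φ (a x - b x) + S x * φ (a x) * b') x := by
  have h := (hS.mul ((hΦ _).comp x ha)).sub (hD.mul ((hΦ _).comp x (ha.sub hb)))
  refine h.congr_deriv ?_
  simp only [Function.comp_apply, Pi.sub_apply]
  linear_combination (b' - a') * hφ

noncomputable def blackScholesD₁ (K σ T r t s : ℝ) : ℝ :=
  (log (s / K) + (r + σ ^ 2 / 2) * (T - t)) / (σ * √(T - t))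

noncomputable def blackScholesD₂ (K σ T r t s : ℝ) : ℝ :=
  blackScholesD₁ K σ T r t s - σ * √(T - t)

noncomputable def blackScholesCall (Φ : ℝ → ℝ) (K σ T r t s : ℝ) : ℝ :=
  s * Φ (blackScholesD₁ K σ T r t s) - K * exp (-r * (T - t)) * Φ (blackScholesD₂ K σ T r t s)

section BlackScholes

variable {Φ : ℝ → ℝ} {K σ T r t s : ℝ}

theorem blackScholesD₁_mul (hσ : σ ≠ 0) (ht : t < T) :
    blackScholesD₁ K σ T r t s * (σ * √(T - t)) = log (s / K) + (r + σ ^ 2 / 2) * (T - t) :=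
  div_mul_cancel₀ _ (mul_ne_zero hσ (sqrt_pos.2 (sub_pos.2 ht)).ne')

theorem discount_mul_gaussianPDFReal_blackScholesD₂ (hK : 0 < K) (hs : 0 < s) (hσ : σ ≠ 0)
    (ht : t < T) :
    K * exp (-r * (T - t)) * gaussianPDFReal 0 1 (blackScholesD₂ K σ T r t s)
      = s * gaussianPDFReal 0 1 (blackScholesD₁ K σ T r t s) := by
  have hexp : exp (log (s / K) + (r + σ ^ 2 / 2) * (T - t) - (σ * √(T - t)) ^ 2 / 2)
      = s / K * exp (r * (T - t)) := by
    rw [mul_pow, sq_sqrt (sub_pos.2 ht).le, ← exp_log (div_pos hs hK), ← exp_add, log_exp]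
    ring_nf
  rw [blackScholesD₂, gaussianPDFReal_zero_one_sub, blackScholesD₁_mul hσ ht, hexp, neg_mul,
    exp_neg]
  field_simp

theorem hasDerivAt_blackScholesD₁_spot (hK : K ≠ 0) (hs : s ≠ 0) :
    HasDerivAt (blackScholesD₁ K σ T r t) (s⁻¹ / (σ * √(T - t))) s := by
  have h := (((hasDerivAt_log hs).sub_const (log K)).add_const
    ((r + σ ^ 2 / 2) * (T - t))).div_const (σ * √(T - t))
  refine h.congr_of_eventuallyEq ?_
  filter_upwards [eventually_ne_nhds hs] with w hw
  rw [blackScholesD₁, log_div hw hK]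

theorem differentiableAt_blackScholesD₁_time (hσ : σ ≠ 0) (ht : t < T) :
    DifferentiableAt ℝ (fun t => blackScholesD₁ K σ T r t s) t := by
  have hτ : T - t ≠ 0 := (sub_pos.2 ht).ne'
  have hvol : σ * √(T - t) ≠ 0 := mul_ne_zero hσ (sqrt_pos.2 (sub_pos.2 ht)).ne'
  unfold blackScholesD₁
  fun_prop (disch := assumption)

theorem hasDerivAt_blackScholesCall_spot (hΦ : ∀ y, HasDerivAt Φ (gaussianPDFReal 0 1 y) y)
    (hK : 0 < K) (hs : 0 < s) (hσ : σ ≠ 0) (ht : t < T) :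
    HasDerivAt (blackScholesCall Φ K σ T r t) (Φ (blackScholesD₁ K σ T r t s)) s := by
  have h := hasDerivAt_mul_comp_sub_mul_comp_sub hΦ (hasDerivAt_id s)
    (hasDerivAt_const s (K * exp (-r * (T - t)))) (hasDerivAt_blackScholesD₁_spot hK.ne' hs.ne')
    (hasDerivAt_const s (σ * √(T - t))) (discount_mul_gaussianPDFReal_blackScholesD₂ hK hs hσ ht)
  exact h.congr_deriv (by simp)

theorem hasDerivAt_blackScholesCall_time (hΦ : ∀ y, HasDerivAt Φ (gaussianPDFReal 0 1 y) y)
    (hK : 0 < K) (hs : 0 < s) (hσ : σ ≠ 0) (ht : t < T) :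
    HasDerivAt (fun t => blackScholesCall Φ K σ T r t s)
      (-(s * gaussianPDFReal 0 1 (blackScholesD₁ K σ T r t s) * σ / (2 * √(T - t)))
        - r * K * exp (-r * (T - t)) * Φ (blackScholesD₂ K σ T r t s)) t := by
  have hdisc : HasDerivAt (fun t => K * exp (-r * (T - t))) (K * (exp (-r * (T - t)) * r)) t := by
    simpa using (((hasDerivAt_id t).const_sub T).const_mul (-r)).exp.const_mul K
  have hvol : HasDerivAt (fun t => σ * √(T - t)) (σ * (-1 / (2 * √(T - t)))) t :=
    (((hasDerivAt_id t).const_sub T).sqrt (sub_pos.2 ht).ne').const_mul σ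
  have h := hasDerivAt_mul_comp_sub_mul_comp_sub hΦ (hasDerivAt_const t s) hdisc
    (differentiableAt_blackScholesD₁_time hσ ht).hasDerivAt hvol
    (discount_mul_gaussianPDFReal_blackScholesD₂ hK hs hσ ht)
  refine h.congr_deriv ?_
  rw [blackScholesD₂]
  ring

end BlackScholes

theorem BS_call_price_satisfies_BS_PDE_general
    (K σ T r : ℝ) (hK : 0 < K) (hσ : 0 < σ)
    (Φ : ℝ → ℝ)
    (hΦ : ∀ y, Φ y = ∫ x in Set.Iic y, Real.exp (-x ^ 2 / 2) / Real.sqrt (2 * Real.pi))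
    (d₁ d₂ : ℝ → ℝ → ℝ)
    (hd₁ : ∀ t s, d₁ t s
      = (Real.log (s / K) + (r + σ ^ 2 / 2) * (T - t)) / (σ * Real.sqrt (T - t)))
    (hd₂ : ∀ t s, d₂ t s = d₁ t s - σ * Real.sqrt (T - t))
    (C : ℝ → ℝ → ℝ)
    (hC : ∀ t s, C t s = s * Φ (d₁ t s) - K * Real.exp (-r * (T - t)) * Φ (d₂ t s)) :
    ∀ t s : ℝ, 0 ≤ t → t < T → 0 < s →
      deriv (fun τ => C τ s) t
        + (1 / 2) * σ ^ 2 * s ^ 2 * deriv (fun u => deriv (fun w => C t w) u) s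
        + r * s * deriv (fun u => C t u) s
        - r * C t s = 0 := by
  intro t s _ htT hs
  have hΦ' : ∀ y, HasDerivAt Φ (gaussianPDFReal 0 1 y) y := by
    simp only [funext hΦ, ← gaussianPDFReal_zero_one]
    exact hasDerivAt_integral_Iic (continuous_gaussianPDFReal 0 1) (integrable_gaussianPDFReal 0 1)
  obtain rfl : C = blackScholesCall Φ K σ T r := by
    funext t s
    rw [hC, hd₂, hd₁]
    rfl
  have hdelta : deriv (blackScholesCall Φ K σ T r t) =ᶠ[𝓝 s]
      fun u => Φ (blackScholesD₁ K σ T r t u) := by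
    filter_upwards [eventually_gt_nhds hs] with u hu
    exact (hasDerivAt_blackScholesCall_spot hΦ' hK hu hσ.ne' htT).deriv
  have hgamma : HasDerivAt (fun u => Φ (blackScholesD₁ K σ T r t u))
      (gaussianPDFReal 0 1 (blackScholesD₁ K σ T r t s) * (s⁻¹ / (σ * √(T - t)))) s :=
    (hΦ' _).comp s (hasDerivAt_blackScholesD₁_spot hK.ne' hs.ne')
  rw [(hasDerivAt_blackScholesCall_time hΦ' hK hs hσ.ne' htT).deriv, hdelta.deriv_eq,
    hgamma.deriv, hdelta.self_of_nhds, blackScholesCall]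
  have hsqrt : 0 < √(T - t) := sqrt_pos.2 (sub_pos.2 htT)
  field_simp
  ring

/-- The Black–Scholes call price function satisfies the Black–Scholes PDE. -/
theorem BS_call_price_satisfies_BS_PDE
    (K σ T r : ℝ) (hK : 0 < K) (hσ : 0 < σ) (hT : 0 < T)
    (Φ : ℝ → ℝ)
    (hΦ : ∀ y, Φ y = ∫ x in Set.Iic y, Real.exp (-x ^ 2 / 2) / Real.sqrt (2 * Real.pi))
    (d₁ d₂ : ℝ → ℝ → ℝ)
    (hd₁ : ∀ t s, d₁ t s
      = (Real.log (s / K) + (r + σ ^ 2 / 2) * (T - t)) / (σ * Real.sqrt (T - t)))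
    (hd₂ : ∀ t s, d₂ t s = d₁ t s - σ * Real.sqrt (T - t))
    (C : ℝ → ℝ → ℝ)
    (hC : ∀ t s, C t s = s * Φ (d₁ t s) - K * Real.exp (-r * (T - t)) * Φ (d₂ t s)) :
    ∀ t s : ℝ, 0 ≤ t → t < T → 0 < s →
      deriv (fun τ => C τ s) t
        + (1 / 2) * σ ^ 2 * s ^ 2 * deriv (fun u => deriv (fun w => C t w) u) s
        + r * s * deriv (fun u => C t u) s
        - r * C t s = 0 :=
  BS_call_price_satisfies_BS_PDE_general K σ T r hK hσ Φ hΦ d₁ d₂ hd₁ hd₂ C hC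
end

section
/- Gaussian convex ordering in the variance: let R : ℝ → ℝ be convex, let a ∈ ℝ, and let 0 ≤ t₁ ≤ t₂ be real numbers. If the function x ↦ R(a + x) is integrable with respect to the centered Gaussian measure of variance t₁ and with respect to the centered Gaussian measure of variance t₂, then ∫_ℝ R(a + x) dγ_{0,t₁}(x) ≤ ∫_ℝ R(a + x) dγ_{0,t₂}(x), where γ_{0,t} denotes the Gaussian measure on ℝ with mean 0 and variance t. -/
open MeasureTheory ProbabilityTheory
open scoped NNReal

lemma convex_symm_sum_mono (R : ℝ → ℝ) (hR : ConvexOn ℝ Set.univ R) (a : ℝ)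
    {c₁ c₂ : ℝ} (h0 : 0 ≤ c₁) (h12 : c₁ ≤ c₂) (z : ℝ) :
    R (a + c₁ * z) + R (a - c₁ * z) ≤ R (a + c₂ * z) + R (a - c₂ * z) := by
  rcases eq_or_lt_of_le (h0.trans h12) with hc2 | hc2
  · have hc1 : c₁ = 0 := le_antisymm (h12.trans hc2.symm.le) h0
    simp [hc1, ← hc2]
  · set l : ℝ := (1 + c₁ / c₂) / 2 with hl
    have hr : c₁ / c₂ ∈ Set.Icc (0:ℝ) 1 :=
      ⟨div_nonneg h0 hc2.le, (div_le_one hc2).2 h12⟩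
    have hl0 : 0 ≤ l := by dsimp [l]; linarith [hr.1]
    have hml0 : 0 ≤ 1 - l := by dsimp [l]; linarith [hr.2]
    have hsum : l + (1 - l) = 1 := by ring
    have key : (2 * l - 1) * c₂ = c₁ := by
      dsimp [l]; field_simp; ring
    have e1 : a + c₁ * z = l • (a + c₂ * z) + (1 - l) • (a - c₂ * z) := by
      rw [smul_eq_mul, smul_eq_mul]; linear_combination (-z) * key
    have e2 : a - c₁ * z = (1 - l) • (a + c₂ * z) + l • (a - c₂ * z) := by
      rw [smul_eq_mul, smul_eq_mul]; linear_combination z * key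
    have i1 := hR.2 (Set.mem_univ (a + c₂ * z)) (Set.mem_univ (a - c₂ * z)) hl0 hml0 hsum
    have i2 := hR.2 (Set.mem_univ (a + c₂ * z)) (Set.mem_univ (a - c₂ * z)) hml0 hl0
      (by linarith : (1 - l) + l = 1)
    rw [← e1] at i1
    rw [← e2] at i2
    simp only [smul_eq_mul] at i1 i2
    nlinarith [i1, i2]

/-- Gaussian convex ordering in the variance: the Gaussian expectation of a
convex function (shifted by `a`) is monotone in the variance. -/
theorem gaussian_convex_order_in_variance
    (R : ℝ → ℝ) (hR : ConvexOn ℝ Set.univ R) (a : ℝ)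
    (t₁ t₂ : ℝ≥0) (h : t₁ ≤ t₂)
    (h1 : Integrable (fun x => R (a + x)) (gaussianReal 0 t₁))
    (h2 : Integrable (fun x => R (a + x)) (gaussianReal 0 t₂)) :
    ∫ x, R (a + x) ∂(gaussianReal 0 t₁) ≤ ∫ x, R (a + x) ∂(gaussianReal 0 t₂) := by
  have hRcont : Continuous R := by
    rw [← continuousOn_univ]
    exact hR.continuousOn isOpen_univ
  have hRm : ∀ μ : Measure ℝ, AEStronglyMeasurable (fun x => R (a + x)) μ := fun μ =>
    (hRcont.comp (continuous_const.add continuous_id)).aestronglyMeasurable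
  have hRm' : ∀ (c : ℝ) (μ : Measure ℝ), AEStronglyMeasurable (fun z => R (a + c * z)) μ :=
    fun c μ => (hRcont.comp (continuous_const.add (continuous_const.mul continuous_id))).aestronglyMeasurable
  set g : Measure ℝ := gaussianReal 0 1 with hg
  have hmap : ∀ t : ℝ≥0, g.map (fun z => Real.sqrt t * z) = gaussianReal 0 t := by
    intro t
    have ht : (⟨(Real.sqrt t)^2, sq_nonneg _⟩ : ℝ≥0) = t := by
      ext; simp [Real.sq_sqrt t.2]
    calc (gaussianReal 0 1).map (fun z => Real.sqrt t * z)
        = (gaussianReal 0 1).map (Real.sqrt t * ·) := rfl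
      _ = gaussianReal (Real.sqrt t * 0) (⟨(Real.sqrt t)^2, sq_nonneg _⟩ * 1) :=
          gaussianReal_map_const_mul _
      _ = gaussianReal 0 t := by rw [mul_zero]; congr 1; exact (mul_one _).trans ht
  have hneg : g.map (fun z => -z) = g := by
    have h0 := gaussianReal_map_const_mul (μ := 0) (v := 1) (-1)
    have h1' : (⟨(-1:ℝ)^2, sq_nonneg _⟩ : ℝ≥0) * 1 = 1 := by ext; norm_num
    simpa [h1', (by funext z; ring : (fun z : ℝ => -1 * z) = fun z => -z)] using h0
  have hint : ∀ t : ℝ≥0,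
      ∫ x, R (a + x) ∂(gaussianReal 0 t) = ∫ z, R (a + Real.sqrt t * z) ∂g := by
    intro t
    rw [← hmap t, integral_map (by fun_prop) (hRm _)]
  have hinteg : ∀ t : ℝ≥0, Integrable (fun x => R (a + x)) (gaussianReal 0 t) →
      Integrable (fun z => R (a + Real.sqrt t * z)) g := by
    intro t ht
    rw [← hmap t] at ht
    have := (integrable_map_measure (f := fun z => Real.sqrt t * z)
      (g := fun x => R (a + x)) (hRm _) (by fun_prop)).mp ht
    simpa [Function.comp_def] using this
  have hint1 := hinteg t₁ h1
  have hint2 := hinteg t₂ h2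
  have hintn : ∀ c : ℝ, Integrable (fun z => R (a + c * z)) g →
      Integrable (fun z => R (a - c * z)) g := by
    intro c hc
    have hc' : Integrable (fun z => R (a + c * z)) (g.map (fun z => -z)) := by
      rw [hneg]; exact hc
    have := (integrable_map_measure (f := fun z : ℝ => -z)
      (g := fun z => R (a + c * z)) (hRm' c _) (by fun_prop)).mp hc'
    simpa [Function.comp_def, sub_eq_add_neg, mul_neg] using this
  have hint1n := hintn _ hint1
  have hint2n := hintn _ hint2
  have hsymm : ∀ c : ℝ, Integrable (fun z => R (a + c * z)) g →
      ∫ z, R (a + c * z) ∂g = ∫ z, (R (a + c * z) + R (a - c * z)) / 2 ∂g := by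
    intro c hc
    have hmapint : ∫ z, R (a + c * z) ∂g = ∫ z, R (a - c * z) ∂g := by
      conv_lhs => rw [← hneg]
      rw [integral_map (by fun_prop) (hRm' c _)]
      simp [sub_eq_add_neg, mul_neg]
    rw [integral_div, integral_add hc (hintn c hc), ← hmapint]
    ring
  rw [hint t₁, hint t₂, hsymm _ hint1, hsymm _ hint2]
  refine integral_mono ((hint1.add hint1n).div_const 2) ((hint2.add hint2n).div_const 2) ?_
  intro z
  have hkey := convex_symm_sum_mono R hR a (Real.sqrt_nonneg t₁)
    (Real.sqrt_le_sqrt (by exact_mod_cast h)) z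
  exact div_le_div_of_nonneg_right hkey (by norm_num) |>.trans_eq rfl
end
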